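/- arXiv:1612.05843 — 2 statements merged into one kernel-verified Lean document; each statement's English description precedes it below -/
import Mathlib

section
/- Let n ≥ 1 be an integer and K > 0, d > 0 real numbers. Then for every r with 0 < r ≤ d, the following inequality holds: r^n · (∫₀^d sinh^{n-1}(√K t) dt) / (∫₀^r sinh^{n-1}(√K t) dt) ≤ d^n · e^{(n-1)√K·d}. -/
/-!
Rescaling `t = (d / r) s` turns `∫₀^d sinh^m (a t) dt` into `(d / r) ∫₀^r sinh^m (a (d / r) s) ds`.
On `[0, r]` the elementary bound `sinh y ≤ y eʸ` gives
`sinh (c x) ≤ c x e^{c x} ≤ c e^{a d} sinh x` for `c = d / r ≥ 1` and `x = a s`,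
so the integrand grows by at most the factor `(c e^{a d})^m`.
-/

open Real intervalIntegral

/-- Equivalent to `1 - 2x ≤ e^{-2x}`, so it holds for every real `x`. -/
theorem Real.sinh_le_mul_exp (x : ℝ) : sinh x ≤ x * exp x := by
  have hexp : exp (-x) = exp (-(2 * x)) * exp x := by rw [← exp_add]; ring_nf
  have h := add_one_le_exp (-(2 * x))
  rw [sinh_eq, hexp]
  nlinarith [exp_pos x]

theorem Real.sinh_mul_le {c x : ℝ} (hc : 1 ≤ c) (hx : 0 ≤ x) :
    sinh (c * x) ≤ c * exp (c * x) * sinh x := by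
  have hc₀ : 0 ≤ c := zero_le_one.trans hc
  calc sinh (c * x) ≤ c * x * exp (c * x) := sinh_le_mul_exp (c * x)
    _ ≤ c * sinh x * exp (c * x) := by gcongr; exact self_le_sinh_iff.2 hx
    _ = c * exp (c * x) * sinh x := by ring

theorem Real.sinh_pow_mul_le {a c s d : ℝ} (m : ℕ) (ha : 0 ≤ a) (hc : 1 ≤ c) (hs : 0 ≤ s)
    (hcs : c * s ≤ d) :
    sinh (a * (c * s)) ^ m ≤ (c * exp (a * d)) ^ m * sinh (a * s) ^ m := by
  have has : 0 ≤ a * s := mul_nonneg ha hs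
  have hsinh : 0 ≤ sinh (a * (c * s)) :=
    sinh_nonneg_iff.2 (mul_nonneg ha (mul_nonneg (zero_le_one.trans hc) hs))
  rw [← mul_pow]
  refine pow_le_pow_left₀ hsinh ?_ m
  calc sinh (a * (c * s)) = sinh (c * (a * s)) := by ring_nf
    _ ≤ c * exp (c * (a * s)) * sinh (a * s) := sinh_mul_le hc has
    _ ≤ c * exp (a * d) * sinh (a * s) := by
        have hexp : exp (c * (a * s)) ≤ exp (a * d) := by
          rw [exp_le_exp, mul_left_comm]
          exact mul_le_mul_of_nonneg_left hcs ha
        gcongr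

theorem integral_sinh_pow_le (m : ℕ) {a r d : ℝ} (ha : 0 ≤ a) (hr : 0 < r) (hrd : r ≤ d) :
    ∫ t in (0 : ℝ)..d, sinh (a * t) ^ m ≤
      (d / r) ^ (m + 1) * exp (a * d) ^ m * ∫ t in (0 : ℝ)..r, sinh (a * t) ^ m := by
  set c := d / r
  have hc : 1 ≤ c := (one_le_div hr).2 hrd
  have hcont : Continuous fun t ↦ sinh (a * t) ^ m := by fun_prop
  have hrescale : ∫ t in (0 : ℝ)..d, sinh (a * t) ^ m
      = c * ∫ s in (0 : ℝ)..r, sinh (a * (c * s)) ^ m := by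
    rw [mul_integral_comp_mul_left (f := fun t ↦ sinh (a * t) ^ m), mul_zero,
      div_mul_cancel₀ d hr.ne']
  have hpointwise : ∀ s ∈ Set.Icc 0 r,
      sinh (a * (c * s)) ^ m ≤ (c * exp (a * d)) ^ m * sinh (a * s) ^ m := by
    intro s hs
    refine sinh_pow_mul_le m ha hc hs.1 ?_
    calc c * s ≤ c * r := by gcongr; exact hs.2
      _ = d := div_mul_cancel₀ d hr.ne'
  calc ∫ t in (0 : ℝ)..d, sinh (a * t) ^ m
      = c * ∫ s in (0 : ℝ)..r, sinh (a * (c * s)) ^ m := hrescale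
    _ ≤ c * ∫ s in (0 : ℝ)..r, (c * exp (a * d)) ^ m * sinh (a * s) ^ m := by
        gcongr
        exact integral_mono_on hr.le
          ((hcont.comp (continuous_const_mul c)).intervalIntegrable 0 r)
          ((continuous_const.mul hcont).intervalIntegrable 0 r) hpointwise
    _ = c ^ (m + 1) * exp (a * d) ^ m * ∫ t in (0 : ℝ)..r, sinh (a * t) ^ m := by
        rw [integral_const_mul]; ring

theorem integral_sinh_ratio_bound_general (n : ℕ) (hn : 1 ≤ n) (K d : ℝ)
    (r : ℝ) (hr : 0 < r) (hrd : r ≤ d) :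
    r ^ n * (∫ t in (0 : ℝ)..d, Real.sinh (Real.sqrt K * t) ^ (n - 1)) /
        (∫ t in (0 : ℝ)..r, Real.sinh (Real.sqrt K * t) ^ (n - 1)) ≤
      d ^ n * Real.exp (((n : ℝ) - 1) * Real.sqrt K * d) := by
  obtain ⟨m, rfl⟩ := Nat.exists_eq_add_of_le' hn
  have hK : 0 ≤ √K := sqrt_nonneg K
  have hIr : 0 ≤ ∫ t in (0 : ℝ)..r, sinh (√K * t) ^ m :=
    integral_nonneg hr.le fun t ht ↦ pow_nonneg (sinh_nonneg_iff.2 (mul_nonneg hK ht.1)) m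
  have hd : 0 < d := hr.trans_le hrd
  simp only [Nat.add_sub_cancel, Nat.cast_add, Nat.cast_one, add_sub_cancel_right]
  refine div_le_of_le_mul₀ hIr (by positivity) ?_
  calc r ^ (m + 1) * ∫ t in (0 : ℝ)..d, sinh (√K * t) ^ m
      ≤ r ^ (m + 1) * ((d / r) ^ (m + 1) * exp (√K * d) ^ m *
          ∫ t in (0 : ℝ)..r, sinh (√K * t) ^ m) := by
        gcongr; exact integral_sinh_pow_le m hK hr hrd
    _ = d ^ (m + 1) * exp (m * √K * d) * ∫ t in (0 : ℝ)..r, sinh (√K * t) ^ m := by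
        rw [← exp_nat_mul, div_pow]; field_simp

/-- Let `n ≥ 1` be an integer and `K > 0`, `d > 0`. Then for every `r` with `0 < r ≤ d`,
`r^n · (∫₀^d sinh^{n-1}(√K t) dt) / (∫₀^r sinh^{n-1}(√K t) dt) ≤ d^n · e^{(n-1)√K d}`. -/
theorem integral_sinh_ratio_bound (n : ℕ) (hn : 1 ≤ n) (K d : ℝ) (hK : 0 < K) (hd : 0 < d)
    (r : ℝ) (hr : 0 < r) (hrd : r ≤ d) :
    r ^ n * (∫ t in (0 : ℝ)..d, Real.sinh (Real.sqrt K * t) ^ (n - 1)) /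
        (∫ t in (0 : ℝ)..r, Real.sinh (Real.sqrt K * t) ^ (n - 1)) ≤
      d ^ n * Real.exp (((n : ℝ) - 1) * Real.sqrt K * d) :=
  integral_sinh_ratio_bound_general n hn K d r hr hrd
end

section
/- Let n ≥ 1 be an integer and K ≥ 0, d > 0. Then for every r with 0 < r ≤ d, one has (∫₀^{10r} sinh^{n-1}(√K t) dt) / (∫₀^{r} sinh^{n-1}(√K t) dt) ≤ 10 · (sinh(10√K d)/sinh(√K d))^{n-1} ≤ 10^n · e^{9(n-1)√K·d} (with the ratio sinh(10√K d)/sinh(√K d) interpreted as its limit 10 when K = 0). -/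
noncomputable def F (x : ℝ) : ℝ :=
  2 * (Real.cosh x + Real.cosh (3*x) + Real.cosh (5*x) + Real.cosh (7*x) + Real.cosh (9*x))

lemma sinh_ten (x : ℝ) : Real.sinh (10 * x) = Real.sinh x * F x := by
  have h := Real.exp_ne_zero x
  have e : ∀ k : ℕ, Real.exp ((k:ℝ) * x) = Real.exp x ^ k := fun k => Real.exp_nat_mul x k
  have e3 := e 3; have e5 := e 5; have e7 := e 7; have e9 := e 9; have e10 := e 10
  push_cast at e3 e5 e7 e9 e10
  unfold F
  simp only [Real.sinh_eq, Real.cosh_eq, Real.exp_neg, e3, e5, e7, e9, e10]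
  field_simp
  ring


lemma F_mono {x y : ℝ} (hx : 0 ≤ x) (hxy : x ≤ y) : F x ≤ F y := by
  have hy : 0 ≤ y := hx.trans hxy
  unfold F
  have h : ∀ c : ℝ, 0 < c → Real.cosh (c * x) ≤ Real.cosh (c * y) := by
    intro c hc
    rw [Real.cosh_le_cosh, abs_of_nonneg (by positivity), abs_of_nonneg (by positivity)]
    nlinarith
  have h1 := h 1 one_pos
  rw [one_mul, one_mul] at h1
  nlinarith [h 3 (by norm_num), h 5 (by norm_num), h 7 (by norm_num), h 9 (by norm_num)]

lemma F_le {x : ℝ} (hx : 0 ≤ x) : F x ≤ 10 * Real.exp (9 * x) := by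
  unfold F
  have h : ∀ c : ℝ, 0 < c → c ≤ 9 → Real.cosh (c * x) ≤ Real.exp (9 * x) := by
    intro c hc hc9
    rw [Real.cosh_eq]
    have h1 : Real.exp (c * x) ≤ Real.exp (9 * x) := Real.exp_le_exp.2 (by nlinarith)
    have h2 : Real.exp (-(c * x)) ≤ Real.exp (9 * x) := Real.exp_le_exp.2 (by nlinarith)
    linarith
  have h1 := h 1 one_pos (by norm_num)
  rw [one_mul] at h1
  nlinarith [h 3 (by norm_num) (by norm_num),
    h 5 (by norm_num) (by norm_num), h 7 (by norm_num) (by norm_num),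
    h 9 (by norm_num) (by norm_num)]

lemma F_nonneg (x : ℝ) : 0 ≤ F x := by
  unfold F
  have := Real.cosh_pos (x := x)
  nlinarith [Real.cosh_pos (x := 3*x), Real.cosh_pos (x := 5*x), Real.cosh_pos (x := 7*x),
    Real.cosh_pos (x := 9*x)]

/-- Let `n ≥ 1` be an integer and `K ≥ 0`, `d > 0`. Then for every `r` with `0 < r ≤ d`,
`(∫₀^{10r} sinh^{n-1}(√K t) dt) / (∫₀^r sinh^{n-1}(√K t) dt)
  ≤ 10 · (sinh(10√K d)/sinh(√K d))^{n-1} ≤ 10^n · e^{9(n-1)√K d}`,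
where the ratio `sinh(10√K d)/sinh(√K d)` is interpreted as its limit `10` when `K = 0`. -/
theorem integral_sinh_dilation_ratio_bound (n : ℕ) (hn : 1 ≤ n) (K d : ℝ) (hK : 0 ≤ K)
    (hd : 0 < d) (r : ℝ) (hr : 0 < r) (hrd : r ≤ d) (R : ℝ)
    (hR : R = if K = 0 then 10
      else Real.sinh (10 * Real.sqrt K * d) / Real.sinh (Real.sqrt K * d)) :
    (∫ t in (0 : ℝ)..(10 * r), Real.sinh (Real.sqrt K * t) ^ (n - 1)) /
        (∫ t in (0 : ℝ)..r, Real.sinh (Real.sqrt K * t) ^ (n - 1)) ≤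
      10 * R ^ (n - 1) ∧
    10 * R ^ (n - 1) ≤ 10 ^ n * Real.exp (9 * ((n : ℝ) - 1) * Real.sqrt K * d) := by
  set s := Real.sqrt K with hs
  set m := n - 1 with hm
  have hnm : m + 1 = n := Nat.sub_add_cancel hn
  have hmcast : ((m : ℝ)) = (n : ℝ) - 1 := by
    rw [hm]; push_cast [hn]; ring
  by_cases hK0 : K = 0
  · -- K = 0 case
    subst hK0
    rw [if_pos rfl] at hR
    subst hR
    have hs0 : s = 0 := by simp [hs]
    rw [hs0]
    simp only [zero_mul, Real.sinh_zero]
    rcases Nat.eq_or_lt_of_le hn with h1 | h2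
    · -- n = 1
      have hm0 : m = 0 := by omega
      rw [hm0, ← h1]
      simp only [pow_zero, pow_one]
      constructor
      · rw [intervalIntegral.integral_const, intervalIntegral.integral_const]
        simp only [smul_eq_mul, mul_one, sub_zero]
        rw [mul_div_assoc, div_self hr.ne']
        norm_num
      · simp [Real.exp_zero]
    · -- n ≥ 2, m ≥ 1
      have hm1 : 1 ≤ m := by omega
      have hz : (0:ℝ) ^ m = 0 := zero_pow (by omega)
      rw [hz]
      simp only [intervalIntegral.integral_zero, zero_div]
      constructor
      · positivity
      · rw [mul_zero, zero_mul, Real.exp_zero, mul_one]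
        rw [← hnm, pow_succ]
        rw [mul_comm ((10:ℝ)^m) 10]
  · -- K > 0 case
    have hKpos : 0 < K := lt_of_le_of_ne hK (Ne.symm hK0)
    have hspos : 0 < s := Real.sqrt_pos.2 hKpos
    have hsd : 0 < s * d := mul_pos hspos hd
    have hsinh_sd : 0 < Real.sinh (s * d) := Real.sinh_pos_iff.2 hsd
    have hRF : R = F (s * d) := by
      rw [hR, if_neg hK0, show 10 * s * d = 10 * (s * d) by ring, sinh_ten]
      field_simp
    have hRpos : 0 ≤ R := hRF ▸ F_nonneg _
    constructor
    · -- first inequality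
      have hcont1 : Continuous fun t : ℝ => Real.sinh (s * t) ^ m :=
        (Real.continuous_sinh.comp (continuous_const.mul continuous_id)).pow m
      have hcont2 : Continuous fun t : ℝ => Real.sinh (s * (10 * t)) ^ m :=
        (Real.continuous_sinh.comp (continuous_const.mul
          (continuous_const.mul continuous_id))).pow m
      have hD : 0 < ∫ t in (0:ℝ)..r, Real.sinh (s * t) ^ m := by
        apply intervalIntegral.intervalIntegral_pos_of_pos_on
          (hcont1.intervalIntegrable 0 r) _ hr
        intro x hx
        exact pow_pos (Real.sinh_pos_iff.2 (mul_pos hspos hx.1)) m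
      have hsub : (∫ t in (0:ℝ)..(10 * r), Real.sinh (s * t) ^ m)
          = 10 * ∫ t in (0:ℝ)..r, Real.sinh (s * (10 * t)) ^ m := by
        have := intervalIntegral.smul_integral_comp_mul_left
          (fun t : ℝ => Real.sinh (s * t) ^ m) (10 : ℝ) (a := 0) (b := r)
        rw [mul_zero] at this
        rw [← this, smul_eq_mul]
      have hpt : ∀ x ∈ Set.Icc (0:ℝ) r,
          Real.sinh (s * (10 * x)) ^ m ≤ R ^ m * Real.sinh (s * x) ^ m := by
        intro x hx
        have hx0 : 0 ≤ x := hx.1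
        have hsx : 0 ≤ s * x := by positivity
        have hsinh_x : 0 ≤ Real.sinh (s * x) := Real.sinh_nonneg_iff.2 hsx
        have key : Real.sinh (s * (10 * x)) ≤ R * Real.sinh (s * x) := by
          rw [show s * (10 * x) = 10 * (s * x) by ring, sinh_ten, hRF]
          have hF : F (s * x) ≤ F (s * d) :=
            F_mono hsx (by nlinarith [hx.2])
          calc Real.sinh (s * x) * F (s * x) ≤ Real.sinh (s * x) * F (s * d) := by
                exact mul_le_mul_of_nonneg_left hF hsinh_x
            _ = F (s * d) * Real.sinh (s * x) := by ring
        calc Real.sinh (s * (10 * x)) ^ m ≤ (R * Real.sinh (s * x)) ^ m := by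
              apply pow_le_pow_left₀ (Real.sinh_nonneg_iff.2 (by positivity)) key
          _ = R ^ m * Real.sinh (s * x) ^ m := mul_pow _ _ _
      have hmono : (∫ t in (0:ℝ)..r, Real.sinh (s * (10 * t)) ^ m)
          ≤ ∫ t in (0:ℝ)..r, R ^ m * Real.sinh (s * t) ^ m :=
        intervalIntegral.integral_mono_on hr.le (hcont2.intervalIntegrable 0 r)
          ((continuous_const.mul hcont1).intervalIntegrable 0 r) hpt
      rw [intervalIntegral.integral_const_mul] at hmono
      rw [hsub, div_le_iff₀ hD]
      calc 10 * ∫ t in (0:ℝ)..r, Real.sinh (s * (10 * t)) ^ m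
          ≤ 10 * (R ^ m * ∫ t in (0:ℝ)..r, Real.sinh (s * t) ^ m) := by linarith
        _ = 10 * R ^ m * ∫ t in (0:ℝ)..r, Real.sinh (s * t) ^ m := by ring
    · -- second inequality
      have hRle : R ≤ 10 * Real.exp (9 * (s * d)) := hRF ▸ F_le hsd.le
      have h1 : R ^ m ≤ (10 * Real.exp (9 * (s * d))) ^ m := pow_le_pow_left₀ hRpos hRle m
      have h2 : (10 * Real.exp (9 * (s * d))) ^ m
          = 10 ^ m * Real.exp (9 * ((n:ℝ) - 1) * s * d) := by
        rw [mul_pow, ← Real.exp_nat_mul, hmcast]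
        ring_nf
      calc 10 * R ^ m ≤ 10 * (10 ^ m * Real.exp (9 * ((n:ℝ) - 1) * s * d)) := by
            rw [← h2]; linarith
        _ = 10 ^ n * Real.exp (9 * ((n:ℝ) - 1) * s * d) := by
            rw [← hnm, pow_succ]; ring
end
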